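/- Let (Ω, μ) be a probability space, let F : Ω → ℝ be a random variable whose law is the exponential distribution of rate 1, and let I : Ω → ℝ be a nonnegative random variable independent of F. Then for all real a ≥ 0 and b ≥ 0, μ{ ω : F(ω) > a + b · I(ω) } = e^(−a) · ∫_Ω e^(−b·I(ω)) dμ(ω). -/

import Mathlib

open MeasureTheory ProbabilityTheory Real

lemma expMeasure_tail (t : ℝ) (ht : 0 ≤ t) :
    expMeasure 1 (Set.Ioi t) = ENNReal.ofReal (Real.exp (-t)) := by
  have hprob : IsProbabilityMeasure (expMeasure 1) := isProbabilityMeasure_expMeasure one_pos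
  have hIic : expMeasure 1 (Set.Iic t) = ENNReal.ofReal (1 - Real.exp (-t)) := by
    rw [← ofReal_cdf]
    have h := cdf_expMeasure_eq one_pos t
    rw [h, if_pos ht, one_mul]
  have : Set.Ioi t = (Set.Iic t)ᶜ := by simp
  rw [this, measure_compl measurableSet_Iic (measure_ne_top _ _), hIic, measure_univ]
  rw [← ENNReal.ofReal_one, ← ENNReal.ofReal_sub _ (by rw [sub_nonneg, Real.exp_le_one_iff]; linarith)]
  congr 1; ring

/-- The tail probability of a rate-1 exponential fading variable beyond an affine
function of an independent nonnegative interference variable factors into a noise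
term and the Laplace transform of the interference. -/
theorem exp_tail_affine_indep
    {Ω : Type*} [MeasurableSpace Ω] (μ : Measure Ω) [IsProbabilityMeasure μ]
    (F I : Ω → ℝ) (hFmeas : Measurable F) (hImeas : Measurable I)
    (hFlaw : μ.map F = expMeasure 1)
    (hInonneg : ∀ ω, 0 ≤ I ω)
    (hindep : IndepFun F I μ)
    (a b : ℝ) (ha : 0 ≤ a) (hb : 0 ≤ b) :
    μ {ω | F ω > a + b * I ω} =
      ENNReal.ofReal (Real.exp (-a) * ∫ ω, Real.exp (-(b * I ω)) ∂μ) := by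
  have hprob : IsProbabilityMeasure (expMeasure 1) := isProbabilityMeasure_expMeasure one_pos
  have hmap : μ.map (fun ω => (I ω, F ω)) = (μ.map I).prod (expMeasure 1) := by
    rw [← hFlaw]
    exact (indepFun_iff_map_prod_eq_prod_map_map hImeas.aemeasurable
      hFmeas.aemeasurable).mp hindep.symm
  have hS : MeasurableSet {p : ℝ × ℝ | p.2 > a + b * p.1} := by
    apply measurableSet_lt <;> fun_prop
  have h1 : μ {ω | F ω > a + b * I ω}
      = ((μ.map I).prod (expMeasure 1)) {p : ℝ × ℝ | p.2 > a + b * p.1} := by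
    rw [← hmap, Measure.map_apply (by fun_prop) hS]
    rfl
  rw [h1, Measure.prod_apply hS]
  have hae : ∀ᵐ x ∂(μ.map I), 0 ≤ x := by
    rw [ae_map_iff hImeas.aemeasurable (show MeasurableSet {x : ℝ | 0 ≤ x} from measurableSet_Ici)]
    exact Filter.Eventually.of_forall hInonneg
  have h2 : ∫⁻ x, expMeasure 1 (Prod.mk x ⁻¹' {p : ℝ × ℝ | p.2 > a + b * p.1}) ∂(μ.map I)
      = ∫⁻ x, ENNReal.ofReal (Real.exp (-a)) * ENNReal.ofReal (Real.exp (-(b * x))) ∂(μ.map I) := by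
    refine lintegral_congr_ae (hae.mono fun x hx => ?_)
    dsimp only
    have : Prod.mk x ⁻¹' {p : ℝ × ℝ | p.2 > a + b * p.1} = Set.Ioi (a + b * x) := rfl
    rw [this, expMeasure_tail _ (by positivity), ← ENNReal.ofReal_mul (by positivity),
      ← Real.exp_add]
    congr 2; ring
  rw [h2, lintegral_const_mul _ (by fun_prop)]
  have hint : Integrable (fun ω => Real.exp (-(b * I ω))) μ := by
    refine (integrable_const (1 : ℝ)).mono ((Real.measurable_exp.comp ((measurable_const.mul hImeas).neg)).aestronglyMeasurable) ?_
    refine Filter.Eventually.of_forall fun ω => ?_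
    simp only [norm_eq_abs, abs_exp, abs_one]
    exact Real.exp_le_one_iff.mpr (neg_nonpos.mpr (mul_nonneg hb (hInonneg ω)))
  have h3 : ∫⁻ x, ENNReal.ofReal (Real.exp (-(b * x))) ∂(μ.map I)
      = ENNReal.ofReal (∫ ω, Real.exp (-(b * I ω)) ∂μ) := by
    have hm : Measurable fun x : ℝ => ENNReal.ofReal (rexp (-(b * x))) := by
      apply ENNReal.measurable_ofReal.comp
      exact Real.measurable_exp.comp ((measurable_id.const_mul b).neg)
    rw [lintegral_map hm hImeas,
      ← ofReal_integral_eq_lintegral_ofReal hint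
        (Filter.Eventually.of_forall fun ω => (Real.exp_pos _).le)]
  rw [h3, ← ENNReal.ofReal_mul (by positivity)]
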